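/- Let κ ∈ (0,1) and define γ(β) = (2 − β² − 2βκ)/(1 − β²(1+κ²)) when 1 − β² − βκ > 0, and γ(β) = 1/(1−β²) otherwise, for β ∈ [0,1). Then γ attains its minimum over [0,1) at β̄ = κ/(1+κ²), with minimal value γ(β̄) = 1 + 1/(1+κ²). -/

import Mathlib

/-!
With `d = 1 + κ²`, on the region `1 - β² - βκ > 0` one has the identity
`γ(β) - (1 + 1/d) = (κ - dβ)² / (d (1 - β² d))`, so `γ ≥ 1 + 1/d` there with equality exactly at
`β̄ = κ/d`. On the complementary region `β` lies beyond `β̄`, and `1/(1 - β²) ≥ 1 + 1/d` reduces to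
`β (dβ - κ) ≥ 0`.
-/

/-- `γ(β)` as defined in the paper, for a fixed `κ`. -/
noncomputable def gammaFun (κ β : ℝ) : ℝ :=
  if 0 < 1 - β ^ 2 - β * κ then (2 - β ^ 2 - 2 * β * κ) / (1 - β ^ 2 * (1 + κ ^ 2))
  else 1 / (1 - β ^ 2)

section

variable {κ β : ℝ}

lemma one_sub_sq_mul_one_add_sq_pos (hκ : 0 ≤ κ) (hβ : 0 ≤ β) (h : 0 < 1 - β ^ 2 - β * κ) :
    0 < 1 - β ^ 2 * (1 + κ ^ 2) := by
  have hβκ : (β * κ) ^ 2 ≤ β * κ := by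
    have : 0 ≤ β * κ := mul_nonneg hβ hκ
    nlinarith
  nlinarith

lemma ratio_sub_eq_sq_div (h : 1 - β ^ 2 * (1 + κ ^ 2) ≠ 0) :
    (2 - β ^ 2 - 2 * β * κ) / (1 - β ^ 2 * (1 + κ ^ 2)) - (1 + 1 / (1 + κ ^ 2)) =
      (κ - (1 + κ ^ 2) * β) ^ 2 / ((1 + κ ^ 2) * (1 - β ^ 2 * (1 + κ ^ 2))) := by
  have hd : 1 + κ ^ 2 ≠ 0 := by positivity
  field_simp
  ring

lemma le_ratio (hκ : 0 ≤ κ) (hβ : 0 ≤ β) (h : 0 < 1 - β ^ 2 - β * κ) :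
    1 + 1 / (1 + κ ^ 2) ≤ (2 - β ^ 2 - 2 * β * κ) / (1 - β ^ 2 * (1 + κ ^ 2)) := by
  have hden := one_sub_sq_mul_one_add_sq_pos hκ hβ h
  rw [← sub_nonneg, ratio_sub_eq_sq_div hden.ne']
  positivity

lemma le_one_div_one_sub_sq (hβ0 : 0 ≤ β) (hβ1 : β < 1)
    (h : 1 - β ^ 2 - β * κ ≤ 0) :
    1 + 1 / (1 + κ ^ 2) ≤ 1 / (1 - β ^ 2) := by
  have hu : 0 < 1 - β ^ 2 := by nlinarith
  -- `1 - β² - βκ` is decreasing in `β ≥ 0` and positive at `β̄ = κ/(1+κ²)`, so `β ≥ β̄`.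
  have hβbar : κ ≤ (1 + κ ^ 2) * β := by
    by_contra! hlt
    have hd : 0 ≤ (1 + κ ^ 2) * β := by positivity
    nlinarith [mul_lt_mul_of_nonneg_of_pos hlt hlt.le hd (hd.trans_lt hlt),
      mul_le_mul_of_nonneg_left hlt.le (mul_nonneg (by positivity) (hd.trans hlt.le))]
  rw [← sub_nonneg]
  have key : 1 / (1 - β ^ 2) - (1 + 1 / (1 + κ ^ 2)) =
      (β ^ 2 * (1 + κ ^ 2) - (1 - β ^ 2)) / ((1 - β ^ 2) * (1 + κ ^ 2)) := by
    field_simp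
    ring
  rw [key]
  apply div_nonneg _ (by positivity)
  nlinarith [mul_nonneg hβ0 (sub_nonneg.2 hβbar)]

lemma le_gammaFun (hκ : 0 ≤ κ) (hβ : β ∈ Set.Ico (0 : ℝ) 1) :
    1 + 1 / (1 + κ ^ 2) ≤ gammaFun κ β := by
  unfold gammaFun
  split_ifs with h
  · exact le_ratio hκ hβ.1 h
  · exact le_one_div_one_sub_sq hβ.1 hβ.2 (not_lt.1 h)

lemma gammaFun_div_one_add_sq (κ : ℝ) :
    gammaFun κ (κ / (1 + κ ^ 2)) = 1 + 1 / (1 + κ ^ 2) := by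
  have hd : 0 < 1 + κ ^ 2 := by positivity
  have hregion : 1 - (κ / (1 + κ ^ 2)) ^ 2 - κ / (1 + κ ^ 2) * κ = 1 / (1 + κ ^ 2) ^ 2 := by
    field_simp
    ring
  have hden : 1 - (κ / (1 + κ ^ 2)) ^ 2 * (1 + κ ^ 2) = 1 / (1 + κ ^ 2) := by
    field_simp
    ring
  rw [gammaFun, if_pos (by rw [hregion]; positivity), hden]
  field_simp
  ring

lemma div_one_add_sq_mem_Ico (hκ : 0 ≤ κ) : κ / (1 + κ ^ 2) ∈ Set.Ico (0 : ℝ) 1 :=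
  ⟨by positivity, (div_lt_one (by positivity)).2 (by nlinarith [sq_nonneg (κ - 1)])⟩

end

/-- for `κ ∈ (0,1)`, `γ` attains its minimum over `[0,1)` at
`β̄ = κ/(1+κ²)`, with minimal value `1 + 1/(1+κ²)`. -/
theorem stmt13 (κ : ℝ) (hκ : κ ∈ Set.Ioo (0 : ℝ) 1) :
    κ / (1 + κ ^ 2) ∈ Set.Ico (0 : ℝ) 1 ∧
    (∀ β ∈ Set.Ico (0 : ℝ) 1, gammaFun κ (κ / (1 + κ ^ 2)) ≤ gammaFun κ β) ∧
    gammaFun κ (κ / (1 + κ ^ 2)) = 1 + 1 / (1 + κ ^ 2) := by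
  have hκ0 : 0 ≤ κ := hκ.1.le
  refine ⟨div_one_add_sq_mem_Ico hκ0, fun β hβ => ?_, gammaFun_div_one_add_sq κ⟩
  rw [gammaFun_div_one_add_sq]
  exact le_gammaFun hκ0 hβ
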